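/- The universal Novikov ring Λ, consisting of formal sums Σ_{r∈ℝ} a_r T^r with real coefficients a_r such that for every c ∈ ℝ the set {r ≤ c : a_r ≠ 0} is finite, with pointwise addition and convolution multiplication, is a field. -/

import Mathlib

/-- The Novikov condition: for every `c : ℝ`, only finitely many exponents
`r ≤ c` have nonzero coefficient. -/
def NovikovCond (f : ℝ → ℝ) : Prop :=
  ∀ c : ℝ, {r : ℝ | f r ≠ 0 ∧ r ≤ c}.Finite

/-- The underlying set of the universal Novikov ring over `ℝ`. -/
def Novikov : Type := {f : ℝ → ℝ // NovikovCond f}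

/-- Convolution product of coefficient functions. -/
noncomputable def conv (f g : ℝ → ℝ) : ℝ → ℝ :=
  fun r => ∑ᶠ s : ℝ, f s * g (r - s)

/-
A function with the Novikov condition is a Hahn series over `ℝ` whose support is
left-finite (finite below every bound), and convolution is the Hahn series product. Left-finite
supports are closed under sums and products, so it suffices that the Hahn inverse `y` of a
nonzero left-finite `x`, of order `r₀`, is left-finite. Comparing coefficients in `x * y = 1`,
every exponent of `y` other than `-r₀` is an exponent of `y` plus an exponent of `x` minus `r₀`,
and the latter are at least some `ε > 0`. By induction on `n`, only finitely many exponents of `y`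
lie below `-r₀ + n ε`, and these bounds exhaust `ℝ` since `ℝ` is archimedean.
-/

open Set Pointwise

namespace Set

variable {Γ : Type*}

def IsLeftFinite [Preorder Γ] (s : Set Γ) : Prop :=
  ∀ c, (s ∩ Iic c).Finite

section Preorder

variable [Preorder Γ] {s t : Set Γ}

theorem IsLeftFinite.subset (ht : t.IsLeftFinite) (hst : s ⊆ t) : s.IsLeftFinite :=
  fun c => (ht c).subset (inter_subset_inter_left _ hst)

theorem Finite.isLeftFinite (hs : s.Finite) : s.IsLeftFinite :=
  fun _ => hs.inter_of_left _

theorem IsLeftFinite.union (hs : s.IsLeftFinite) (ht : t.IsLeftFinite) :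
    (s ∪ t).IsLeftFinite :=
  fun c => by simpa only [union_inter_distrib_right] using (hs c).union (ht c)

theorem IsLeftFinite.isWF (hs : s.IsLeftFinite) : s.IsWF := by
  rw [isWF_iff_no_descending_seq]
  intro f hf hmem
  refine infinite_range_of_injective hf.injective ((hs (f 0)).subset ?_)
  rintro _ ⟨n, rfl⟩
  exact ⟨hmem n, hf.antitone n.zero_le⟩

end Preorder

section LinearOrder

variable [LinearOrder Γ] {s : Set Γ}

theorem IsLeftFinite.bddBelow [Nonempty Γ] (hs : s.IsLeftFinite) : BddBelow s := by
  rcases s.eq_empty_or_nonempty with rfl | hne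
  · exact bddBelow_empty
  · exact ⟨hs.isWF.min hne, fun _ => hs.isWF.min_le hne⟩

end LinearOrder

section OrderedGroup

variable [AddCommGroup Γ] [LinearOrder Γ] [IsOrderedAddMonoid Γ] {s t : Set Γ}

theorem IsLeftFinite.add (hs : s.IsLeftFinite) (ht : t.IsLeftFinite) :
    (s + t).IsLeftFinite := by
  obtain ⟨a, ha⟩ := hs.bddBelow
  obtain ⟨b, hb⟩ := ht.bddBelow
  intro c
  refine ((hs (c - b)).image2 (· + ·) (ht (c - a))).subset ?_
  rintro _ ⟨⟨x, hx, y, hy, rfl⟩, hc⟩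
  have hc : x + y ≤ c := hc
  refine ⟨x, ⟨hx, ?_⟩, y, ⟨hy, ?_⟩, rfl⟩
  · exact le_sub_iff_add_le.mpr ((add_le_add_right (hb hy) x).trans hc)
  · exact le_sub_iff_add_le'.mpr ((add_le_add_left (ha hx) y).trans hc)

theorem IsLeftFinite.finite_inter_Iic_add_nsmul {a ε : Γ} (ht : t.IsLeftFinite)
    (htε : t ⊆ Ici ε) (hsa : s ⊆ Ici a) (hst : s ⊆ insert a (s + t)) (n : ℕ) :
    (s ∩ Iic (a + n • ε)).Finite := by
  induction n with
  | zero =>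
    refine (finite_singleton a).subset fun z ⟨hz, hza⟩ => ?_
    rw [zero_smul, add_zero] at hza
    exact le_antisymm hza (hsa hz)
  | succ n ih =>
    refine ((ih.image2 (· + ·) (ht ((n + 1) • ε))).insert a).subset ?_
    rintro z ⟨hz, hzc⟩
    obtain rfl | ⟨x, hx, y, hy, rfl⟩ := hst hz
    · exact mem_insert _ _
    refine mem_insert_of_mem _ ⟨x, ⟨hx, ?_⟩, y, ⟨hy, ?_⟩, rfl⟩
    · refine le_of_add_le_add_right (a := ε) ?_
      calc x + ε ≤ x + y := add_le_add_right (htε hy) x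
        _ ≤ a + n • ε + ε := by rwa [add_assoc, ← succ_nsmul]
    · refine le_of_add_le_add_left (a := a) ?_
      calc a + y ≤ x + y := add_le_add_left (hsa hx) y
        _ ≤ a + (n + 1) • ε := hzc

theorem IsLeftFinite.of_subset_insert_add [Archimedean Γ] {a : Γ} (ht : t.IsLeftFinite)
    (ht0 : t ⊆ Ioi 0) (hsa : s ⊆ Ici a) (hst : s ⊆ insert a (s + t)) : s.IsLeftFinite := by
  rcases t.eq_empty_or_nonempty with rfl | hne
  · rw [add_empty, insert_empty_eq] at hst
    exact (finite_singleton a).isLeftFinite.subset hst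
  have hε : 0 < ht.isWF.min hne := ht0 (ht.isWF.min_mem hne)
  intro c
  obtain ⟨n, hn⟩ := Archimedean.arch (c - a) hε
  refine (ht.finite_inter_Iic_add_nsmul (fun _ => ht.isWF.min_le hne) hsa hst n).subset ?_
  exact inter_subset_inter_right _ (Iic_subset_Iic.mpr (sub_le_iff_le_add'.mp hn))

end OrderedGroup

end Set

namespace HahnSeries

variable {Γ R : Type*}

theorem coeff_mul_eq_finsum [AddCommGroup Γ] [PartialOrder Γ] [IsOrderedCancelAddMonoid Γ]
    [NonUnitalNonAssocSemiring R] (x y : HahnSeries Γ R) (a : Γ) :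
    (x * y).coeff a = ∑ᶠ s, x.coeff s * y.coeff (a - s) := by
  classical
  set T := Finset.antidiagonal x.isPWO_support y.isPWO_support a
  have hsupp : (Function.support fun s => x.coeff s * y.coeff (a - s)) ⊆ T.image Prod.fst := by
    intro s hs
    refine Finset.mem_image.mpr ⟨(s, a - s), ?_, rfl⟩
    rw [Finset.mem_antidiagonal]
    exact ⟨left_ne_zero_of_mul hs, right_ne_zero_of_mul hs, add_sub_cancel _ _⟩
  have hfst : Set.InjOn Prod.fst (T : Set (Γ × Γ)) := fun p hp q hq hpq => by
    rw [Finset.mem_coe, Finset.mem_antidiagonal] at hp hq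
    exact Prod.ext hpq (add_left_cancel (hp.2.2.trans (hpq ▸ hq.2.2).symm))
  rw [finsum_eq_finsetSum_of_support_subset _ hsupp, Finset.sum_image hfst, coeff_mul]
  refine Finset.sum_congr rfl fun p hp => ?_
  rw [Finset.mem_antidiagonal] at hp
  rw [← hp.2.2, add_sub_cancel_left]

theorem exists_ne_of_coeff_mul_eq_zero [AddCommMonoid Γ] [PartialOrder Γ]
    [IsOrderedCancelAddMonoid Γ] [NonUnitalNonAssocSemiring R] [NoZeroDivisors R]
    {x y : HahnSeries Γ R} {a b : Γ} (h : (x * y).coeff (a + b) = 0) (ha : x.coeff a ≠ 0)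
    (hb : y.coeff b ≠ 0) : ∃ a' ∈ x.support, ∃ b' ∈ y.support, a' ≠ a ∧ a' + b' = a + b := by
  classical
  by_contra! hne
  have hab : (a, b) ∈ Finset.antidiagonal x.isPWO_support y.isPWO_support (a + b) :=
    Finset.mem_antidiagonal.mpr ⟨ha, hb, rfl⟩
  refine mul_ne_zero ha hb ?_
  rw [← h, coeff_mul, Finset.sum_eq_single_of_mem _ hab]
  rintro ⟨a', b'⟩ hmem hne'
  rw [Finset.mem_antidiagonal] at hmem
  have ha' : a' ≠ a := by
    rintro rfl
    exact hne' (Prod.ext rfl (add_left_cancel hmem.2.2))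
  exact mul_eq_zero_of_right _ (of_not_not fun hb' => hne a' hmem.1 b' hb' ha' hmem.2.2)

theorem support_subset_insert_add_of_mul_eq_one [AddCommGroup Γ] [LinearOrder Γ]
    [IsOrderedAddMonoid Γ] [Ring R] [NoZeroDivisors R] {x y : HahnSeries Γ R} (h : x * y = 1) :
    y.support ⊆ insert (-x.order) (y.support + (x.support \ {x.order} + {-x.order})) := by
  intro r hr
  have : Nontrivial R := ⟨⟨_, _, hr⟩⟩
  rcases eq_or_ne r (-x.order) with rfl | hro
  · exact mem_insert _ _
  have hx : x.coeff x.order ≠ 0 := coeff_order_eq_zero.not.mpr (left_ne_zero_of_mul_eq_one h)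
  have hcoeff : (x * y).coeff (x.order + r) = 0 := by
    rw [h, coeff_one, if_neg]
    exact fun h0 => hro (eq_neg_of_add_eq_zero_right h0)
  obtain ⟨a', ha', b', hb', hne, hsum⟩ := exists_ne_of_coeff_mul_eq_zero hcoeff hx hr
  refine mem_insert_of_mem _ ⟨b', hb', a' + -x.order, ⟨a', ⟨ha', hne⟩, -x.order, rfl, rfl⟩, ?_⟩
  change b' + (a' + -x.order) = r
  rw [← add_assoc, add_comm b', hsum, add_neg_cancel_comm]

theorem isLeftFinite_support_inv [AddCommGroup Γ] [LinearOrder Γ] [IsOrderedAddMonoid Γ]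
    [Archimedean Γ] [Field R] {x : HahnSeries Γ R} (hx : x.support.IsLeftFinite) :
    x⁻¹.support.IsLeftFinite := by
  rcases eq_or_ne x 0 with rfl | hx0
  · rw [inv_zero, support_zero]
    exact finite_empty.isLeftFinite
  have hxy : x * x⁻¹ = 1 := mul_inv_cancel₀ hx0
  have horder : x⁻¹.order = -x.order := by
    have := order_mul hx0 (inv_ne_zero hx0)
    rw [hxy, order_one] at this
    exact (neg_eq_of_add_eq_zero_right this.symm).symm
  refine IsLeftFinite.of_subset_insert_add
    ((hx.subset sdiff_subset).add (finite_singleton _).isLeftFinite) ?_ ?_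
    (support_subset_insert_add_of_mul_eq_one hxy)
  · rintro _ ⟨s, ⟨hs, hso⟩, _, rfl, rfl⟩
    change 0 < s + -x.order
    rw [← sub_eq_add_neg, sub_pos]
    exact (order_le_of_coeff_ne_zero hs).lt_of_ne (Ne.symm hso)
  · exact fun r hr => horder ▸ order_le_of_coeff_ne_zero hr

variable (Γ R) in
def novikovSubfield [AddCommGroup Γ] [LinearOrder Γ] [IsOrderedAddMonoid Γ] [Archimedean Γ]
    [Field R] : Subfield (HahnSeries Γ R) where
  carrier := {x | x.support.IsLeftFinite}
  zero_mem' := finite_empty.isLeftFinite.subset support_zero.subset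
  one_mem' := (finite_singleton 0).isLeftFinite.subset support_one.subset
  add_mem' hx hy := (IsLeftFinite.union hx hy).subset (support_add_subset _ _)
  neg_mem' hx := IsLeftFinite.subset hx (support_neg_subset _)
  mul_mem' hx hy := (IsLeftFinite.add hx hy).subset support_mul_subset
  inv_mem' _ := isLeftFinite_support_inv

end HahnSeries

theorem novikovCond_iff_isLeftFinite {f : ℝ → ℝ} :
    NovikovCond f ↔ (Function.support f).IsLeftFinite :=
  Iff.rfl

def Novikov.equivNovikovSubfield : Novikov ≃ HahnSeries.novikovSubfield ℝ ℝ where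
  toFun f := ⟨⟨f.1, (novikovCond_iff_isLeftFinite.mp f.2).isWF.isPWO⟩, f.2⟩
  invFun x := ⟨x.1.coeff, x.2⟩
  left_inv _ := rfl
  right_inv _ := rfl

/-- The universal Novikov ring, with pointwise addition and convolution
multiplication, is a field. -/
theorem novikov_is_field :
    ∃ F : Field Novikov,
      (∀ f g : Novikov, (F.add f g).1 = fun r => f.1 r + g.1 r) ∧
      (∀ f g : Novikov, (F.mul f g).1 = conv f.1 g.1) :=
  ⟨Novikov.equivNovikovSubfield.field, fun _ _ => rfl,
    fun _ _ => funext (HahnSeries.coeff_mul_eq_finsum _ _)⟩
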